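/- Fix σ > 0. The balanced population MLE loss is strictly decreasing in the separation Δ = μ₁ − μ₀ on (0, 1): for all μ₀ < μ₁ and μ₀′ < μ₁′ with 0 < μ₁ − μ₀ < μ₁′ − μ₀′ < 1, one has MLE(μ₀, μ₁) > MLE(μ₀′, μ₁′). -/

import Mathlib

/-!
Substituting `s = μ₁ + σ z` in the first integral and `s = μ₀ - σ z` in the second gives
`MLE σ μ₀ μ₁ = K τ` with `τ = (μ₁ - μ₀) / σ` and `K τ = 𝔼 log (1 + exp u)`, where `Z ∼ N(0, 1)` and
`u = -τ Z - τ² / 2`. Differentiating under the integral, `K' τ = 𝔼[sigmoid u · (-Z - τ)]`.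
The reflection `Z ↦ -τ - Z` carries `N(-τ, 1)` to `N(0, 1)`, has likelihood ratio `exp u` and sends
`u` to `-u`; since `exp u · sigmoid (-u) = sigmoid u`, it turns this into `K' τ = 𝔼[sigmoid u · Z]`.
Averaging the two expressions, `K' τ = -(τ / 2) 𝔼[sigmoid u] < 0` for `τ > 0`.
-/

open Real MeasureTheory ProbabilityTheory
open scoped NNReal

/-- The balanced population MLE loss with `γ = (μ₁ − μ₀)/σ²` and `t = (μ₀ + μ₁)/2`. -/
noncomputable def MLE (σ μ₀ μ₁ : ℝ) : ℝ :=
  (1 / 2) * ∫ s, Real.log (1 + Real.exp (-(((μ₁ - μ₀) / σ ^ 2) * (s - (μ₀ + μ₁) / 2))))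
      ∂(gaussianReal μ₁ ⟨σ ^ 2, sq_nonneg σ⟩)
  + (1 / 2) * ∫ s, Real.log (1 + Real.exp (((μ₁ - μ₀) / σ ^ 2) * (s - (μ₀ + μ₁) / 2)))
      ∂(gaussianReal μ₀ ⟨σ ^ 2, sq_nonneg σ⟩)

section Gaussian

variable {E : Type*} [NormedAddCommGroup E] [NormedSpace ℝ E]

lemma gaussianPDFReal_eq_exp_mul_gaussianPDFReal_zero (m : ℝ) (v : ℝ≥0) (x : ℝ) :
    gaussianPDFReal m v x = exp ((m * x - m ^ 2 / 2) / v) * gaussianPDFReal 0 v x := by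
  simp only [gaussianPDFReal, sub_zero]
  rw [mul_left_comm, ← exp_add]
  congr 3
  ring

lemma integral_gaussianReal_eq_integral_exp_smul {v : ℝ≥0} (hv : v ≠ 0) (m : ℝ) (g : ℝ → E) :
    ∫ x, g x ∂gaussianReal m v = ∫ x, exp ((m * x - m ^ 2 / 2) / v) • g x ∂gaussianReal 0 v := by
  simp only [integral_gaussianReal_eq_integral_smul hv, smul_smul,
    gaussianPDFReal_eq_exp_mul_gaussianPDFReal_zero m, mul_comm]

lemma integral_gaussianReal_eq_integral_exp_smul_reflect (τ : ℝ) (g : ℝ → E) :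
    ∫ z, g z ∂gaussianReal 0 1 = ∫ z, exp (-τ * z - τ ^ 2 / 2) • g (-τ - z) ∂gaussianReal 0 1 := by
  have hmap : (gaussianReal (-τ) 1).map (-τ - ·) = gaussianReal 0 1 := by
    rw [gaussianReal_map_const_sub, sub_self]
  conv_lhs => rw [← hmap, (measurableEmbedding_subLeft (-τ)).integral_map,
    integral_gaussianReal_eq_integral_exp_smul one_ne_zero]
  simp only [NNReal.coe_one, div_one, neg_mul, neg_sq]

lemma integral_gaussianReal_eq_integral_affine (m c : ℝ) {v : ℝ≥0} (hc : c ^ 2 = v) {g : ℝ → E}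
    (hg : AEStronglyMeasurable g (gaussianReal m v)) :
    ∫ x, g x ∂gaussianReal m v = ∫ z, g (m + c * z) ∂gaussianReal 0 1 := by
  have hmap : (gaussianReal 0 1).map (fun z ↦ m + c * z) = gaussianReal m v := by
    rw [show (fun z ↦ m + c * z) = (m + ·) ∘ (c * ·) from rfl,
      ← Measure.map_map (by fun_prop) (by fun_prop), gaussianReal_map_const_mul,
      gaussianReal_map_const_add]
    congr 1
    · ring
    · ext; simp [hc]
  rw [← hmap, integral_map (by fun_prop) (hmap ▸ hg)]

lemma integrable_id_gaussianReal (m : ℝ) (v : ℝ≥0) : Integrable (fun x ↦ x) (gaussianReal m v) :=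
  memLp_one_iff_integrable.1 (memLp_id_gaussianReal 1)

lemma integrable_abs_gaussianReal (m : ℝ) (v : ℝ≥0) :
    Integrable (fun x ↦ |x|) (gaussianReal m v) :=
  (integrable_id_gaussianReal m v).abs

end Gaussian

noncomputable def softplus (y : ℝ) : ℝ := log (1 + exp y)

lemma continuous_softplus : Continuous softplus :=
  Continuous.log (by fun_prop) fun y ↦ by positivity

lemma softplus_nonneg (y : ℝ) : 0 ≤ softplus y :=
  log_nonneg (by linarith [exp_pos y])

lemma softplus_le_log_two_add_abs (y : ℝ) : softplus y ≤ log 2 + |y| := by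
  have h : 1 + exp y ≤ 2 * exp |y| := by
    linarith [one_le_exp (abs_nonneg y), exp_le_exp.2 (le_abs_self y)]
  calc softplus y ≤ log (2 * exp |y|) := log_le_log (by positivity) h
    _ = log 2 + |y| := by rw [log_mul two_ne_zero (exp_pos _).ne', log_exp]

lemma hasDerivAt_softplus (y : ℝ) : HasDerivAt softplus (sigmoid y) y := by
  have h := ((hasDerivAt_exp y).const_add 1).log (by positivity : 1 + exp y ≠ 0)
  refine h.congr_deriv ?_
  rw [sigmoid_def, exp_neg]
  field_simp
  ring

lemma integrable_softplus_comp_affine (a b m : ℝ) (v : ℝ≥0) :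
    Integrable (fun x ↦ softplus (a * x - b)) (gaussianReal m v) := by
  refine ((integrable_const (log 2 + |b|)).add
    ((integrable_abs_gaussianReal m v).const_mul |a|)).mono'
    (continuous_softplus.comp (by fun_prop)).aestronglyMeasurable (ae_of_all _ fun x ↦ ?_)
  rw [norm_of_nonneg (softplus_nonneg _), Pi.add_apply]
  have := abs_sub (a * x) b
  rw [abs_mul] at this
  linarith [softplus_le_log_two_add_abs (a * x - b)]

lemma abs_sigmoid_le_one (y : ℝ) : |sigmoid y| ≤ 1 := by
  rw [abs_of_pos (sigmoid_pos y)]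
  exact sigmoid_le_one y

lemma exp_mul_sigmoid_neg (y : ℝ) : exp y * sigmoid (-y) = sigmoid y := by
  simpa [mul_comm] using sigmoid_mul_rexp_neg (-y)

section Sigmoid

variable {α : Type*} [MeasurableSpace α] {μ : Measure α} {f : α → ℝ}

lemma integrable_sigmoid_comp_mul {g : α → ℝ} (hf : AEStronglyMeasurable f μ)
    (hg : Integrable g μ) : Integrable (fun x ↦ sigmoid (f x) * g x) μ :=
  hg.bdd_mul (continuous_sigmoid.comp_aestronglyMeasurable hf)
    (ae_of_all _ fun x ↦ abs_sigmoid_le_one (f x))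

lemma integral_sigmoid_comp_pos [IsFiniteMeasure μ] [NeZero μ] (hf : AEStronglyMeasurable f μ) :
    0 < ∫ x, sigmoid (f x) ∂μ := by
  have hint : Integrable (fun x ↦ sigmoid (f x)) μ :=
    .of_bound (continuous_sigmoid.comp_aestronglyMeasurable hf) 1
      (ae_of_all _ fun x ↦ abs_sigmoid_le_one (f x))
  rw [integral_pos_iff_support_of_nonneg (fun x ↦ sigmoid_nonneg _) hint,
    Function.support_eq_univ fun x ↦ (sigmoid_pos _).ne']
  simp [NeZero.ne μ]

end Sigmoid

noncomputable def standardMLE (τ : ℝ) : ℝ :=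
  ∫ z, softplus (-τ * z - τ ^ 2 / 2) ∂gaussianReal 0 1

lemma integrable_sigmoid_mul_neg_sub (τ : ℝ) :
    Integrable (fun z ↦ sigmoid (-τ * z - τ ^ 2 / 2) * (-z - τ)) (gaussianReal 0 1) :=
  integrable_sigmoid_comp_mul (by fun_prop)
    ((integrable_id_gaussianReal 0 1).neg.sub (integrable_const τ))

lemma hasDerivAt_standardMLE (τ₀ : ℝ) :
    HasDerivAt standardMLE (∫ z, sigmoid (-τ₀ * z - τ₀ ^ 2 / 2) * (-z - τ₀) ∂gaussianReal 0 1)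
      τ₀ := by
  have hderiv (z τ : ℝ) : HasDerivAt (fun τ ↦ softplus (-τ * z - τ ^ 2 / 2))
      (sigmoid (-τ * z - τ ^ 2 / 2) * (-z - τ)) τ := by
    have h := ((hasDerivAt_neg τ).mul_const z).sub ((hasDerivAt_pow 2 τ).div_const 2)
    exact (hasDerivAt_softplus _).comp τ (h.congr_deriv (by ring))
  have hbound (z τ : ℝ) (hτ : τ ∈ Metric.ball τ₀ 1) :
      ‖sigmoid (-τ * z - τ ^ 2 / 2) * (-z - τ)‖ ≤ |z| + (|τ₀| + 1) := by
    have hτ' : |τ| ≤ |τ₀| + 1 := by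
      have := abs_sub_abs_le_abs_sub τ τ₀
      rw [Metric.mem_ball, dist_eq] at hτ
      linarith
    rw [norm_mul, norm_eq_abs, norm_eq_abs]
    calc |sigmoid (-τ * z - τ ^ 2 / 2)| * |-z - τ| ≤ 1 * (|z| + |τ|) := by
          gcongr
          · exact abs_sigmoid_le_one _
          · simpa using abs_sub (-z) τ
      _ ≤ |z| + (|τ₀| + 1) := by linarith
  exact (hasDerivAt_integral_of_dominated_loc_of_deriv_le (Metric.ball_mem_nhds τ₀ one_pos)
    (Filter.Eventually.of_forall fun τ ↦
      (integrable_softplus_comp_affine (-τ) (τ ^ 2 / 2) 0 1).aestronglyMeasurable)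
    (integrable_softplus_comp_affine (-τ₀) (τ₀ ^ 2 / 2) 0 1)
    (integrable_sigmoid_mul_neg_sub τ₀).aestronglyMeasurable
    (ae_of_all _ fun z τ hτ ↦ hbound z τ hτ)
    ((integrable_abs_gaussianReal 0 1).add (integrable_const _))
    (ae_of_all _ fun z τ _ ↦ hderiv z τ)).2

lemma integral_sigmoid_mul_neg_sub (τ : ℝ) :
    ∫ z, sigmoid (-τ * z - τ ^ 2 / 2) * (-z - τ) ∂gaussianReal 0 1
      = -(τ / 2) * ∫ z, sigmoid (-τ * z - τ ^ 2 / 2) ∂gaussianReal 0 1 := by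
  have hreflect : ∫ z, sigmoid (-τ * z - τ ^ 2 / 2) * (-z - τ) ∂gaussianReal 0 1
      = ∫ z, sigmoid (-τ * z - τ ^ 2 / 2) * z ∂gaussianReal 0 1 := by
    rw [integral_gaussianReal_eq_integral_exp_smul_reflect τ]
    refine integral_congr_ae (ae_of_all _ fun z ↦ ?_)
    have hu : -τ * (-τ - z) - τ ^ 2 / 2 = -(-τ * z - τ ^ 2 / 2) := by ring
    simp only [smul_eq_mul, hu, ← exp_mul_sigmoid_neg (-τ * z - τ ^ 2 / 2)]
    ring
  have hsum := integral_add (integrable_sigmoid_mul_neg_sub τ)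
    (integrable_sigmoid_comp_mul (f := fun z ↦ -τ * z - τ ^ 2 / 2) (by fun_prop)
      (integrable_id_gaussianReal 0 1))
  rw [← hreflect] at hsum
  have hcollect : ∫ z, sigmoid (-τ * z - τ ^ 2 / 2) * (-z - τ) + sigmoid (-τ * z - τ ^ 2 / 2) * z
      ∂gaussianReal 0 1 = -τ * ∫ z, sigmoid (-τ * z - τ ^ 2 / 2) ∂gaussianReal 0 1 := by
    rw [← integral_const_mul]
    congr with z
    ring
  linarith

lemma standardMLE_strictAntiOn : StrictAntiOn standardMLE (Set.Ici 0) := by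
  refine strictAntiOn_of_deriv_neg (convex_Ici 0)
    (fun τ _ ↦ (hasDerivAt_standardMLE τ).continuousAt.continuousWithinAt) fun τ hτ ↦ ?_
  rw [interior_Ici, Set.mem_Ioi] at hτ
  rw [(hasDerivAt_standardMLE τ).deriv, integral_sigmoid_mul_neg_sub]
  have hpos := integral_sigmoid_comp_pos (μ := gaussianReal 0 1)
    (f := fun z ↦ -τ * z - τ ^ 2 / 2) (by fun_prop)
  nlinarith

lemma MLE_eq_standardMLE {σ : ℝ} (hσ : σ ≠ 0) (μ₀ μ₁ : ℝ) :
    MLE σ μ₀ μ₁ = standardMLE ((μ₁ - μ₀) / σ) := by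
  have hμ₁ : ∫ s, softplus (-(((μ₁ - μ₀) / σ ^ 2) * (s - (μ₀ + μ₁) / 2)))
      ∂(gaussianReal μ₁ ⟨σ ^ 2, sq_nonneg σ⟩) = standardMLE ((μ₁ - μ₀) / σ) := by
    refine (integral_gaussianReal_eq_integral_affine μ₁ σ rfl ?_).trans (integral_congr_ae ?_)
    · exact (continuous_softplus.comp (by fun_prop)).aestronglyMeasurable
    refine ae_of_all _ fun z ↦ congrArg softplus ?_
    field_simp
    ring_nf
  have hμ₀ : ∫ s, softplus (((μ₁ - μ₀) / σ ^ 2) * (s - (μ₀ + μ₁) / 2))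
      ∂(gaussianReal μ₀ ⟨σ ^ 2, sq_nonneg σ⟩) = standardMLE ((μ₁ - μ₀) / σ) := by
    refine (integral_gaussianReal_eq_integral_affine μ₀ (-σ) (by rw [neg_sq]; rfl) ?_).trans
      (integral_congr_ae ?_)
    · exact (continuous_softplus.comp (by fun_prop)).aestronglyMeasurable
    refine ae_of_all _ fun z ↦ congrArg softplus ?_
    field_simp
    ring_nf
  simp only [softplus] at hμ₁ hμ₀
  rw [MLE, hμ₁, hμ₀]
  ring

theorem MLE_strictAnti_in_separation_general
    (σ : ℝ) (hσ : 0 < σ) (μ₀ μ₁ μ₀' μ₁' : ℝ)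
    (h : μ₀ < μ₁)
    (hlt : μ₁ - μ₀ < μ₁' - μ₀') :
    MLE σ μ₀' μ₁' < MLE σ μ₀ μ₁ := by
  rw [MLE_eq_standardMLE hσ.ne', MLE_eq_standardMLE hσ.ne']
  have hτ : 0 < (μ₁ - μ₀) / σ := div_pos (sub_pos.2 h) hσ
  have hτ' : (μ₁ - μ₀) / σ < (μ₁' - μ₀') / σ := div_lt_div_of_pos_right hlt hσ
  exact standardMLE_strictAntiOn (Set.mem_Ici.2 hτ.le) (Set.mem_Ici.2 (hτ.trans hτ').le) hτ'

/-- The balanced population MLE loss is strictly decreasing in the separation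
`Δ = μ₁ − μ₀` on `(0, 1)`. -/
theorem MLE_strictAnti_in_separation
    (σ : ℝ) (hσ : 0 < σ) (μ₀ μ₁ μ₀' μ₁' : ℝ)
    (h : μ₀ < μ₁) (h' : μ₀' < μ₁')
    (hlt : μ₁ - μ₀ < μ₁' - μ₀') (hub : μ₁' - μ₀' < 1) :
    MLE σ μ₀' μ₁' < MLE σ μ₀ μ₁ :=
  MLE_strictAnti_in_separation_general σ hσ μ₀ μ₁ μ₀' μ₁' h hlt
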